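/- Let Â be an N×N random matrix with square-integrable entries, and let Ḡ ∈ ℝ^{n̄×N²} satisfy ḠᵀḠ = E[row(Â)ᵀ row(Â)], where row(Â) ∈ ℝ^{1×N²} is the row-wise vectorization of Â. Partition Ḡ = [Ḡ₁,…,Ḡ_N] with Ḡᵢ ∈ ℝ^{n̄×N}, and set G̃ := [Ḡ₁ᵀ,…,Ḡ_Nᵀ]ᵀ ∈ ℝ^{Nn̄×N}. Then for every symmetric matrix P ∈ ℝ^{N×N}, G̃ᵀ(P ⊗ I_{n̄})G̃ = E[ÂᵀPÂ]. -/
import Mathlib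


open MeasureTheory Matrix
open scoped Kronecker

/-- If `ḠᵀḠ = E[row(Â)ᵀ row(Â)]` and `G̃` is the stacking of the blocks of `Ḡ`,
then `G̃ᵀ(P ⊗ I)G̃ = E[ÂᵀPÂ]` for every symmetric `P`. -/
theorem kron_quadratic_form_representation {Ω : Type*} [MeasurableSpace Ω]
    (P : Measure Ω) [IsProbabilityMeasure P] {N nb : ℕ}
    (Ahat : Ω → Matrix (Fin N) (Fin N) ℝ)
    (hmeas : ∀ i j : Fin N, Measurable fun ω => Ahat ω i j)
    (hint : ∀ p q : Fin N × Fin N,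
      Integrable (fun ω => Ahat ω p.1 p.2 * Ahat ω q.1 q.2) P)
    (Gbar : Matrix (Fin nb) (Fin N × Fin N) ℝ)
    (hGbar : ∀ p q : Fin N × Fin N,
      (Gbarᵀ * Gbar) p q = ∫ ω, Ahat ω p.1 p.2 * Ahat ω q.1 q.2 ∂P)
    (Gtil : Matrix (Fin N × Fin nb) (Fin N) ℝ)
    (hGtil : ∀ (i : Fin N) (s : Fin nb) (j : Fin N), Gtil (i, s) j = Gbar s (i, j))
    (Q : Matrix (Fin N) (Fin N) ℝ) (hQ : Q.IsSymm) :
    ∀ i j : Fin N,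
      (Gtilᵀ * (Q ⊗ₖ (1 : Matrix (Fin nb) (Fin nb) ℝ)) * Gtil) i j =
        ∫ ω, ((Ahat ω)ᵀ * Q * Ahat ω) i j ∂P := by
  intro i j
  have hRHS : (∫ ω, ((Ahat ω)ᵀ * Q * Ahat ω) i j ∂P)
      = ∑ k : Fin N, ∑ l : Fin N, Q k l * ∫ ω, Ahat ω k i * Ahat ω l j ∂P := by
    have hfun : ∀ ω, ((Ahat ω)ᵀ * Q * Ahat ω) i j
        = ∑ k : Fin N, ∑ l : Fin N, Q k l * (Ahat ω k i * Ahat ω l j) := by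
      intro ω
      simp only [Matrix.mul_apply, Matrix.transpose_apply, Finset.sum_mul]
      rw [Finset.sum_comm]
      refine Finset.sum_congr rfl fun k _ => Finset.sum_congr rfl fun l _ => by ring
    simp only [hfun]
    rw [integral_finset_sum]
    · refine Finset.sum_congr rfl fun k _ => ?_
      rw [integral_finset_sum]
      · exact Finset.sum_congr rfl fun l _ => integral_const_mul _ _
      · exact fun l _ => (hint (k, i) (l, j)).const_mul _
    · exact fun k _ => integrable_finset_sum _ fun l _ => (hint (k, i) (l, j)).const_mul _
  rw [hRHS]
  have hG : ∀ k l : Fin N, (∫ ω, Ahat ω k i * Ahat ω l j ∂P)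
      = ∑ s : Fin nb, Gbar s (k, i) * Gbar s (l, j) := by
    intro k l
    rw [← hGbar (k, i) (l, j)]
    simp [Matrix.mul_apply]
  simp only [hG, Matrix.mul_apply, Matrix.transpose_apply, Matrix.kroneckerMap_apply,
    Fintype.sum_prod_type, Matrix.one_apply, hGtil, mul_ite, ite_mul, mul_one, mul_zero,
    zero_mul, Finset.sum_ite_eq, Finset.mem_univ, if_true, Finset.sum_mul, Finset.mul_sum]
  simp only [Finset.sum_ite_eq', Finset.mem_univ, if_true]
  conv_rhs => rw [Finset.sum_comm]
  refine Finset.sum_congr rfl fun x _ => ?_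
  rw [Finset.sum_comm]
  refine Finset.sum_congr rfl fun l _ => Finset.sum_congr rfl fun s _ => by ring
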